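/- For each integer n > 1 and real r ∈ [n/(n−1), 2], let s = 2n/(n−1) − r, and let X_r^n, X_s^n be n-point spaces with all nonzero distances r and s respectively. The small-scale limit L_n(r) = lim_{t→0+}|t(X_r^n * X_s^n)| equals the rational function [((n−1)/n)(r² − r) + ((n−1)/n)(s² − s)] / [((n−1)/n²)r² + ((n−1)/n²)s²], is continuous in r on [n/(n−1), 2], satisfies L_n(n/(n−1)) = 1, and L_n(2) = ((1/2)n³ − (3/2)n² + 2n)/(n² − 2n + 2). -/

import Mathlib

open Filter Topology

/-- The explicit small-scale limit `L_n(r)` for the join `X_r^n * X_s^n`,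
`s = 2n/(n−1) − r`. -/
noncomputable def Lfun (n : ℕ) (r : ℝ) : ℝ :=
  (((n : ℝ) - 1) / n * (r ^ 2 - r)
    + ((n : ℝ) - 1) / n * ((2 * n / ((n : ℝ) - 1) - r) ^ 2 - (2 * n / ((n : ℝ) - 1) - r))) /
  (((n : ℝ) - 1) / (n : ℝ) ^ 2 * r ^ 2
    + ((n : ℝ) - 1) / (n : ℝ) ^ 2 * (2 * n / ((n : ℝ) - 1) - r) ^ 2)

/-- The distance matrix of the join `X_r^n * X_s^n`: all nonzero distances within the first
part equal `r`, within the second part equal `s`, and all cross-distances equal `1`. -/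
noncomputable def constJoinDist (n : ℕ) (r s : ℝ) :
    Matrix (Fin n ⊕ Fin n) (Fin n ⊕ Fin n) ℝ :=
  Matrix.of fun a b =>
    match a, b with
    | Sum.inl i, Sum.inl j => if i = j then 0 else r
    | Sum.inr i, Sum.inr j => if i = j then 0 else s
    | _, _ => 1


noncomputable def blk (n : ℕ) (d1 o1 d2 o2 u1 u2 : ℝ) :
    Matrix (Fin n ⊕ Fin n) (Fin n ⊕ Fin n) ℝ :=
  Matrix.of fun x y =>
    match x, y with
    | Sum.inl i, Sum.inl j => if i = j then d1 else o1
    | Sum.inr i, Sum.inr j => if i = j then d2 else o2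
    | Sum.inl _, Sum.inr _ => u1
    | Sum.inr _, Sum.inl _ => u2

lemma sum_ite_left {n : ℕ} (i : Fin n) (A B : ℝ) :
    ∑ x : Fin n, (if i = x then A else B) = A + ((n:ℝ)-1) * B := by
  have h : ∀ x : Fin n, (if i = x then A else B) = B + (if i = x then A - B else 0) := by
    intro x; split <;> ring
  simp only [h, Finset.sum_add_distrib, Finset.sum_const, Finset.card_univ, Fintype.card_fin,
    nsmul_eq_mul, Finset.sum_ite_eq, Finset.mem_univ, if_true]
  ring

lemma sum_ite_right {n : ℕ} (k : Fin n) (A B : ℝ) :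
    ∑ x : Fin n, (if x = k then A else B) = A + ((n:ℝ)-1) * B := by
  have h : ∀ x : Fin n, (if x = k then A else B) = (if k = x then A else B) := by
    intro x; simp [eq_comm]
  simp only [h, sum_ite_left]

lemma sum_ite_mul_ite {n : ℕ} (i k : Fin n) (d o e f : ℝ) :
    ∑ j : Fin n, (if i = j then d else o) * (if j = k then e else f)
      = if i = k then d*e + ((n:ℝ)-1)*(o*f) else d*f + o*e + ((n:ℝ)-2)*(o*f) := by
  have h : ∀ j : Fin n, (if i = j then d else o) * (if j = k then e else f)
      = o*f + (if i = j then (d-o)*f else 0) + (if j = k then o*(e-f) else 0)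
        + (if i = j then (if j = k then (d-o)*(e-f) else 0) else 0) := by
    intro j
    split_ifs <;> ring
  simp only [h, Finset.sum_add_distrib, Finset.sum_const, Finset.card_univ, Fintype.card_fin,
    nsmul_eq_mul, Finset.sum_ite_eq, Finset.sum_ite_eq', Finset.mem_univ, if_true]
  rcases eq_or_ne i k with h1 | h1
  · simp only [h1, if_pos rfl, if_true]; ring
  · simp only [if_neg h1]; ring

lemma blk_mul (n : ℕ) (d1 o1 d2 o2 u1 u2 e1 f1 e2 f2 v1 v2 : ℝ) :
    blk n d1 o1 d2 o2 u1 u2 * blk n e1 f1 e2 f2 v1 v2 =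
    blk n (d1*e1 + ((n:ℝ)-1)*(o1*f1) + n*(u1*v2))
          (d1*f1 + o1*e1 + ((n:ℝ)-2)*(o1*f1) + n*(u1*v2))
          (d2*e2 + ((n:ℝ)-1)*(o2*f2) + n*(u2*v1))
          (d2*f2 + o2*e2 + ((n:ℝ)-2)*(o2*f2) + n*(u2*v1))
          ((d1 + ((n:ℝ)-1)*o1)*v1 + u1*(e2 + ((n:ℝ)-1)*f2))
          ((d2 + ((n:ℝ)-1)*o2)*v2 + u2*(e1 + ((n:ℝ)-1)*f1)) := by
  ext x y
  cases x with
  | inl i =>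
    cases y with
    | inl k =>
      simp only [Matrix.mul_apply, Fintype.sum_sum_type, blk, Matrix.of_apply,
        Finset.sum_add_distrib, sum_ite_mul_ite, Finset.sum_const, Finset.card_univ,
        Fintype.card_fin, nsmul_eq_mul]
      rcases eq_or_ne i k with h1 | h1
      · simp only [h1, if_pos rfl, if_true]; try ring
      · simp only [if_neg h1]; try ring
    | inr k =>
      simp only [Matrix.mul_apply, Fintype.sum_sum_type, blk, Matrix.of_apply,
        Finset.sum_add_distrib, sum_ite_left, sum_ite_right, Finset.sum_const,
        Finset.card_univ, Fintype.card_fin, nsmul_eq_mul, ← Finset.sum_mul, ← Finset.mul_sum]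
      try ring
  | inr i =>
    cases y with
    | inl k =>
      simp only [Matrix.mul_apply, Fintype.sum_sum_type, blk, Matrix.of_apply,
        Finset.sum_add_distrib, sum_ite_left, sum_ite_right, Finset.sum_const,
        Finset.card_univ, Fintype.card_fin, nsmul_eq_mul, ← Finset.sum_mul, ← Finset.mul_sum]
      try ring
    | inr k =>
      simp only [Matrix.mul_apply, Fintype.sum_sum_type, blk, Matrix.of_apply,
        Finset.sum_add_distrib, sum_ite_mul_ite, Finset.sum_const, Finset.card_univ,
        Fintype.card_fin, nsmul_eq_mul]
      rcases eq_or_ne i k with h1 | h1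
      · simp only [h1, if_pos rfl, if_true]; try ring
      · simp only [if_neg h1]; try ring

lemma blk_one (n : ℕ) : blk n 1 0 1 0 0 0 = (1 : Matrix (Fin n ⊕ Fin n) (Fin n ⊕ Fin n) ℝ) := by
  ext x y
  cases x <;> cases y <;>
    simp [blk, Matrix.one_apply, Sum.inl.injEq, Sum.inr.injEq, eq_comm]

lemma sum_blk (n : ℕ) (d1 o1 d2 o2 u1 u2 : ℝ) :
    ∑ x, ∑ y, blk n d1 o1 d2 o2 u1 u2 x y
      = n*d1 + (n:ℝ)*((n:ℝ)-1)*o1 + n*d2 + (n:ℝ)*((n:ℝ)-1)*o2 + (n:ℝ)^2*u1 + (n:ℝ)^2*u2 := by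
  simp only [Fintype.sum_sum_type, blk, Matrix.of_apply, Finset.sum_add_distrib, sum_ite_left,
    Finset.sum_const, Finset.card_univ, Fintype.card_fin, nsmul_eq_mul]
  ring


section scalars
variable (m a b c : ℝ)

lemma scalarE1 (ha' : (1:ℝ) - a ≠ 0)
    (hD : (1 + (m-1)*a)*(1 + (m-1)*b) - m^2*c^2 ≠ 0) :
    1*((1-a)⁻¹ + (m*c^2 - a*(1 + (m-1)*b)) / ((1-a)*((1 + (m-1)*a)*(1 + (m-1)*b) - m^2*c^2)))
      + (m-1)*(a*((m*c^2 - a*(1 + (m-1)*b)) / ((1-a)*((1 + (m-1)*a)*(1 + (m-1)*b) - m^2*c^2))))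
      + m*(c*(-c/((1 + (m-1)*a)*(1 + (m-1)*b) - m^2*c^2))) = 1 := by
  generalize hX : (1 + (m-1)*a)*(1 + (m-1)*b) - m^2*c^2 = X at hD ⊢
  field_simp; subst hX; ring

lemma scalarE2 (ha' : (1:ℝ) - a ≠ 0)
    (hD : (1 + (m-1)*a)*(1 + (m-1)*b) - m^2*c^2 ≠ 0) :
    1*((m*c^2 - a*(1 + (m-1)*b)) / ((1-a)*((1 + (m-1)*a)*(1 + (m-1)*b) - m^2*c^2)))
      + a*((1-a)⁻¹ + (m*c^2 - a*(1 + (m-1)*b)) / ((1-a)*((1 + (m-1)*a)*(1 + (m-1)*b) - m^2*c^2)))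
      + (m-2)*(a*((m*c^2 - a*(1 + (m-1)*b)) / ((1-a)*((1 + (m-1)*a)*(1 + (m-1)*b) - m^2*c^2))))
      + m*(c*(-c/((1 + (m-1)*a)*(1 + (m-1)*b) - m^2*c^2))) = 0 := by
  generalize hX : (1 + (m-1)*a)*(1 + (m-1)*b) - m^2*c^2 = X at hD ⊢
  field_simp; subst hX; ring

lemma scalarE3 (hb' : (1:ℝ) - b ≠ 0)
    (hD : (1 + (m-1)*a)*(1 + (m-1)*b) - m^2*c^2 ≠ 0) :
    1*((1-b)⁻¹ + (m*c^2 - b*(1 + (m-1)*a)) / ((1-b)*((1 + (m-1)*a)*(1 + (m-1)*b) - m^2*c^2)))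
      + (m-1)*(b*((m*c^2 - b*(1 + (m-1)*a)) / ((1-b)*((1 + (m-1)*a)*(1 + (m-1)*b) - m^2*c^2))))
      + m*(c*(-c/((1 + (m-1)*a)*(1 + (m-1)*b) - m^2*c^2))) = 1 := by
  generalize hX : (1 + (m-1)*a)*(1 + (m-1)*b) - m^2*c^2 = X at hD ⊢
  field_simp; subst hX; ring

lemma scalarE4 (hb' : (1:ℝ) - b ≠ 0)
    (hD : (1 + (m-1)*a)*(1 + (m-1)*b) - m^2*c^2 ≠ 0) :
    1*((m*c^2 - b*(1 + (m-1)*a)) / ((1-b)*((1 + (m-1)*a)*(1 + (m-1)*b) - m^2*c^2)))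
      + b*((1-b)⁻¹ + (m*c^2 - b*(1 + (m-1)*a)) / ((1-b)*((1 + (m-1)*a)*(1 + (m-1)*b) - m^2*c^2)))
      + (m-2)*(b*((m*c^2 - b*(1 + (m-1)*a)) / ((1-b)*((1 + (m-1)*a)*(1 + (m-1)*b) - m^2*c^2))))
      + m*(c*(-c/((1 + (m-1)*a)*(1 + (m-1)*b) - m^2*c^2))) = 0 := by
  generalize hX : (1 + (m-1)*a)*(1 + (m-1)*b) - m^2*c^2 = X at hD ⊢
  field_simp; subst hX; ring

lemma scalarE5 (hb' : (1:ℝ) - b ≠ 0)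
    (hD : (1 + (m-1)*a)*(1 + (m-1)*b) - m^2*c^2 ≠ 0) :
    (1 + (m-1)*a)*(-c/((1 + (m-1)*a)*(1 + (m-1)*b) - m^2*c^2))
      + c*(((1-b)⁻¹ + (m*c^2 - b*(1 + (m-1)*a)) / ((1-b)*((1 + (m-1)*a)*(1 + (m-1)*b) - m^2*c^2)))
        + (m-1)*((m*c^2 - b*(1 + (m-1)*a)) / ((1-b)*((1 + (m-1)*a)*(1 + (m-1)*b) - m^2*c^2)))) = 0 := by
  generalize hX : (1 + (m-1)*a)*(1 + (m-1)*b) - m^2*c^2 = X at hD ⊢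
  field_simp; subst hX; ring

lemma scalarE6 (ha' : (1:ℝ) - a ≠ 0)
    (hD : (1 + (m-1)*a)*(1 + (m-1)*b) - m^2*c^2 ≠ 0) :
    (1 + (m-1)*b)*(-c/((1 + (m-1)*a)*(1 + (m-1)*b) - m^2*c^2))
      + c*(((1-a)⁻¹ + (m*c^2 - a*(1 + (m-1)*b)) / ((1-a)*((1 + (m-1)*a)*(1 + (m-1)*b) - m^2*c^2)))
        + (m-1)*((m*c^2 - a*(1 + (m-1)*b)) / ((1-a)*((1 + (m-1)*a)*(1 + (m-1)*b) - m^2*c^2)))) = 0 := by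
  generalize hX : (1 + (m-1)*a)*(1 + (m-1)*b) - m^2*c^2 = X at hD ⊢
  field_simp; subst hX; ring

lemma srow (ha' : (1:ℝ) - a ≠ 0)
    (hD : (1 + (m-1)*a)*(1 + (m-1)*b) - m^2*c^2 ≠ 0) :
    m*((1-a)⁻¹ + (m*c^2 - a*(1 + (m-1)*b)) / ((1-a)*((1 + (m-1)*a)*(1 + (m-1)*b) - m^2*c^2)))
      + m*(m-1)*((m*c^2 - a*(1 + (m-1)*b)) / ((1-a)*((1 + (m-1)*a)*(1 + (m-1)*b) - m^2*c^2)))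
      = m * (1 + (m-1)*b) / ((1 + (m-1)*a)*(1 + (m-1)*b) - m^2*c^2) := by
  generalize hX : (1 + (m-1)*a)*(1 + (m-1)*b) - m^2*c^2 = X at hD ⊢
  field_simp; subst hX; ring

lemma scalarSum (ha' : (1:ℝ) - a ≠ 0) (hb' : (1:ℝ) - b ≠ 0)
    (hD : (1 + (m-1)*a)*(1 + (m-1)*b) - m^2*c^2 ≠ 0) :
    m*((1-a)⁻¹ + (m*c^2 - a*(1 + (m-1)*b)) / ((1-a)*((1 + (m-1)*a)*(1 + (m-1)*b) - m^2*c^2)))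
      + m*(m-1)*((m*c^2 - a*(1 + (m-1)*b)) / ((1-a)*((1 + (m-1)*a)*(1 + (m-1)*b) - m^2*c^2)))
      + m*((1-b)⁻¹ + (m*c^2 - b*(1 + (m-1)*a)) / ((1-b)*((1 + (m-1)*a)*(1 + (m-1)*b) - m^2*c^2)))
      + m*(m-1)*((m*c^2 - b*(1 + (m-1)*a)) / ((1-b)*((1 + (m-1)*a)*(1 + (m-1)*b) - m^2*c^2)))
      + m^2*(-c/((1 + (m-1)*a)*(1 + (m-1)*b) - m^2*c^2))
      + m^2*(-c/((1 + (m-1)*a)*(1 + (m-1)*b) - m^2*c^2))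
      = m * ((1 + (m-1)*a) + (1 + (m-1)*b) - 2*m*c)
          / ((1 + (m-1)*a)*(1 + (m-1)*b) - m^2*c^2) := by
  have h1 := srow m a b c ha' hD
  have h2 := srow m b a c hb'
    (by rw [show (1 + (m-1)*b)*(1 + (m-1)*a) = (1 + (m-1)*a)*(1 + (m-1)*b) from mul_comm _ _]
        exact hD)
  rw [show (1 + (m-1)*b)*(1 + (m-1)*a) = (1 + (m-1)*a)*(1 + (m-1)*b) from mul_comm _ _] at h2
  linear_combination h1 + h2
end scalars

lemma sum_inv_blk (n : ℕ) (a b c : ℝ) (ha : a ≠ 1) (hb : b ≠ 1)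
    (hD : (1 + ((n:ℝ)-1)*a)*(1 + ((n:ℝ)-1)*b) - (n:ℝ)^2*c^2 ≠ 0) :
    ∑ x, ∑ y, (blk n 1 a 1 b c c)⁻¹ x y =
      (n:ℝ) * ((1 + ((n:ℝ)-1)*a) + (1 + ((n:ℝ)-1)*b) - 2*(n:ℝ)*c)
        / ((1 + ((n:ℝ)-1)*a)*(1 + ((n:ℝ)-1)*b) - (n:ℝ)^2*c^2) := by
  have ha' : (1:ℝ) - a ≠ 0 := sub_ne_zero.mpr (Ne.symm ha)
  have hb' : (1:ℝ) - b ≠ 0 := sub_ne_zero.mpr (Ne.symm hb)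
  have hinv : (blk n 1 a 1 b c c)⁻¹ =
      blk n
        ((1-a)⁻¹ + ((n:ℝ)*c^2 - a*(1 + ((n:ℝ)-1)*b))
          / ((1-a)*((1 + ((n:ℝ)-1)*a)*(1 + ((n:ℝ)-1)*b) - (n:ℝ)^2*c^2)))
        (((n:ℝ)*c^2 - a*(1 + ((n:ℝ)-1)*b))
          / ((1-a)*((1 + ((n:ℝ)-1)*a)*(1 + ((n:ℝ)-1)*b) - (n:ℝ)^2*c^2)))
        ((1-b)⁻¹ + ((n:ℝ)*c^2 - b*(1 + ((n:ℝ)-1)*a))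
          / ((1-b)*((1 + ((n:ℝ)-1)*a)*(1 + ((n:ℝ)-1)*b) - (n:ℝ)^2*c^2)))
        (((n:ℝ)*c^2 - b*(1 + ((n:ℝ)-1)*a))
          / ((1-b)*((1 + ((n:ℝ)-1)*a)*(1 + ((n:ℝ)-1)*b) - (n:ℝ)^2*c^2)))
        (-c/((1 + ((n:ℝ)-1)*a)*(1 + ((n:ℝ)-1)*b) - (n:ℝ)^2*c^2))
        (-c/((1 + ((n:ℝ)-1)*a)*(1 + ((n:ℝ)-1)*b) - (n:ℝ)^2*c^2)) := by
    apply Matrix.inv_eq_right_inv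
    rw [blk_mul, scalarE1 (n:ℝ) a b c ha' hD, scalarE2 (n:ℝ) a b c ha' hD,
      scalarE3 (n:ℝ) a b c hb' hD, scalarE4 (n:ℝ) a b c hb' hD,
      scalarE5 (n:ℝ) a b c hb' hD, scalarE6 (n:ℝ) a b c ha' hD, blk_one]
  rw [hinv, sum_blk]
  exact scalarSum (n:ℝ) a b c ha' hb' hD

noncomputable def Efun (u : ℝ) : ℝ := (Real.exp (-u) - 1 + u) / u ^ 2

lemma exp_neg_hasDerivAt (x : ℝ) :
    HasDerivAt (fun u : ℝ => Real.exp (-u)) (-Real.exp (-x)) x := by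
  simpa [Function.comp_def] using (Real.hasDerivAt_exp (-x)).comp x (hasDerivAt_neg x)

lemma Efun_tendsto : Tendsto Efun (𝓝[≠] (0:ℝ)) (𝓝 (1/2)) := by
  apply HasDerivAt.lhopital_zero_nhdsNE (f' := fun u : ℝ => -Real.exp (-u) + 1)
    (g' := fun u : ℝ => 2 * u)
  · filter_upwards with x
    exact ((exp_neg_hasDerivAt x).sub_const 1).add (hasDerivAt_id' x)
  · filter_upwards with x using by simpa using (hasDerivAt_pow 2 x)
  · filter_upwards [self_mem_nhdsWithin] with x hx
    simpa using hx
  · have h1 : Tendsto (fun u : ℝ => Real.exp (-u) - 1 + u) (𝓝 0) (𝓝 0) := by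
      have := (Real.continuous_exp.comp continuous_neg).tendsto (0:ℝ)
      have h2 := ((this.sub (tendsto_const_nhds (x := (1:ℝ)))).add (tendsto_id (x := 𝓝 (0:ℝ))))
      norm_num at h2
      exact h2
    exact h1.mono_left nhdsWithin_le_nhds
  · have h1 : Tendsto (fun u : ℝ => u ^ 2) (𝓝 (0:ℝ)) (𝓝 0) := by
      simpa using (continuous_pow 2).tendsto (0:ℝ)
    exact h1.mono_left nhdsWithin_le_nhds
  · have hslope : Tendsto (fun u : ℝ => ((-Real.exp (-u) + 1) - 0) / (u - 0))
        (𝓝[≠] (0:ℝ)) (𝓝 1) := by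
      have hD : HasDerivAt (fun u : ℝ => -Real.exp (-u) + 1) 1 (0:ℝ) := by
        simpa using ((exp_neg_hasDerivAt 0).neg).add_const 1
      have h3 := hasDerivAt_iff_tendsto_slope.mp hD
      apply h3.congr'
      filter_upwards [self_mem_nhdsWithin] with x hx
      simp [slope_def_field, div_eq_inv_mul]
    have h4 := hslope.div_const 2
    apply Tendsto.congr' ?_ (by norm_num at h4 ⊢; exact h4)
    filter_upwards [self_mem_nhdsWithin] with x hx
    have hx' : x ≠ 0 := hx
    rw [div_div, mul_comm]

lemma exp_expand (u : ℝ) (hu : u ≠ 0) : Real.exp (-u) = 1 - u + u ^ 2 * Efun u := by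
  unfold Efun; field_simp; ring

noncomputable def Hpoly (n : ℕ) (r s : ℝ) (p : ℝ×ℝ×ℝ×ℝ) : ℝ :=
  ((n:ℝ)-1)*(r^2*p.1 + s^2*p.2.1) - 2*(n:ℝ)*p.2.2.1

noncomputable def Gpoly (n : ℕ) (r s : ℝ) (p : ℝ×ℝ×ℝ×ℝ) : ℝ :=
  (((n:ℝ)-1)^2*r*s + (n:ℝ)*(((n:ℝ)-1)*(r^2*p.1 + s^2*p.2.1))
      - (n:ℝ)^2 - 2*(n:ℝ)^2*p.2.2.1)
  + p.2.2.2*(-(((n:ℝ)-1)*r)*(((n:ℝ)-1)*s^2*p.2.1) - (((n:ℝ)-1)*s)*(((n:ℝ)-1)*r^2*p.1)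
      + 2*(n:ℝ)^2*p.2.2.1)
  + p.2.2.2^2*((((n:ℝ)-1)*r^2*p.1)*(((n:ℝ)-1)*s^2*p.2.1) - ((n:ℝ)*p.2.2.1)^2)

noncomputable def Hfun (n : ℕ) (r s t : ℝ) : ℝ := Hpoly n r s (Efun (t*r), Efun (t*s), Efun t, t)

noncomputable def Gfun (n : ℕ) (r s t : ℝ) : ℝ := Gpoly n r s (Efun (t*r), Efun (t*s), Efun t, t)

lemma Nf_eq (n : ℕ) (r s t : ℝ) (ht : t ≠ 0) (hr : r ≠ 0) (hs : s ≠ 0)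
    (hrs : ((n:ℝ)-1)*(r+s) = 2*(n:ℝ)) :
    (1 + ((n:ℝ)-1)*Real.exp (-(t*r))) + (1 + ((n:ℝ)-1)*Real.exp (-(t*s)))
      - 2*(n:ℝ)*Real.exp (-t) = t^2 * Hfun n r s t := by
  rw [exp_expand (t*r) (mul_ne_zero ht hr), exp_expand (t*s) (mul_ne_zero ht hs),
    exp_expand t ht]
  unfold Hfun Hpoly
  linear_combination (-t) * hrs

lemma Df_eq (n : ℕ) (r s t : ℝ) (ht : t ≠ 0) (hr : r ≠ 0) (hs : s ≠ 0)
    (hrs : ((n:ℝ)-1)*(r+s) = 2*(n:ℝ)) :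
    (1 + ((n:ℝ)-1)*Real.exp (-(t*r)))*(1 + ((n:ℝ)-1)*Real.exp (-(t*s)))
      - (n:ℝ)^2*Real.exp (-t)^2 = t^2 * Gfun n r s t := by
  rw [exp_expand (t*r) (mul_ne_zero ht hr), exp_expand (t*s) (mul_ne_zero ht hs),
    exp_expand t ht]
  unfold Gfun Gpoly
  linear_combination (-(n:ℝ)*t) * hrs

lemma of_exp_eq_blk (n : ℕ) (r s t : ℝ) :
    (Matrix.of fun a b => Real.exp (-t * constJoinDist n r s a b))
      = blk n 1 (Real.exp (-(t*r))) 1 (Real.exp (-(t*s))) (Real.exp (-t)) (Real.exp (-t)) := by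
  ext x y
  cases x with
  | inl i =>
    cases y with
    | inl j =>
      rcases eq_or_ne i j with h | h <;>
        simp [constJoinDist, blk, h, neg_mul]
    | inr j => simp [constJoinDist, blk]
  | inr i =>
    cases y with
    | inl j => simp [constJoinDist, blk]
    | inr j =>
      rcases eq_or_ne i j with h | h <;>
        simp [constJoinDist, blk, h, neg_mul]

set_option maxHeartbeats 1000000 in
/-- For `n > 1` and `r ∈ [n/(n−1), 2]` (with `s = 2n/(n−1) − r`), the small-scale limit of
`|t(X_r^n * X_s^n)|` equals `L_n(r)`; moreover `L_n` is continuous on `[n/(n−1), 2]`,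
`L_n(n/(n−1)) = 1` and `L_n(2) = (½n³ − ³⁄₂n² + 2n)/(n² − 2n + 2)`. -/
theorem Lfun_properties (n : ℕ) (hn : 1 < n) :
    (∀ r ∈ Set.Icc ((n : ℝ) / ((n : ℝ) - 1)) 2,
      Tendsto (fun t : ℝ => ∑ a, ∑ b,
          (Matrix.of fun a b =>
            Real.exp (-t * constJoinDist n r (2 * n / ((n : ℝ) - 1) - r) a b))⁻¹ a b)
        (𝓝[>] (0 : ℝ)) (𝓝 (Lfun n r))) ∧
    ContinuousOn (Lfun n) (Set.Icc ((n : ℝ) / ((n : ℝ) - 1)) 2) ∧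
    Lfun n ((n : ℝ) / ((n : ℝ) - 1)) = 1 ∧
    Lfun n 2 = ((1 / 2) * (n : ℝ) ^ 3 - (3 / 2) * (n : ℝ) ^ 2 + 2 * n) /
      ((n : ℝ) ^ 2 - 2 * n + 2) := by
  have hn1 : (1:ℝ) < (n:ℝ) := by exact_mod_cast hn
  have hn2 : (2:ℝ) ≤ (n:ℝ) := by exact_mod_cast hn
  have hnpos : (0:ℝ) < (n:ℝ) := by linarith
  have hn0 : (n:ℝ) ≠ 0 := ne_of_gt hnpos
  have hm1pos : (0:ℝ) < (n:ℝ) - 1 := by linarith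
  have hm1 : (n:ℝ) - 1 ≠ 0 := ne_of_gt hm1pos
  have hden : ∀ x ∈ Set.Icc ((n : ℝ) / ((n : ℝ) - 1)) 2,
      ((n : ℝ) - 1) / (n : ℝ) ^ 2 * x ^ 2
        + ((n : ℝ) - 1) / (n : ℝ) ^ 2 * (2 * n / ((n : ℝ) - 1) - x) ^ 2 ≠ 0 := by
    intro x hx
    have hx1 : (n:ℝ) / ((n:ℝ)-1) ≤ x := hx.1
    have hxpos : 0 < x := lt_of_lt_of_le (div_pos hnpos hm1pos) hx1
    have hk : 0 < ((n : ℝ) - 1) / (n : ℝ) ^ 2 := div_pos hm1pos (by positivity)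
    have h1 : 0 < ((n : ℝ) - 1) / (n : ℝ) ^ 2 * x ^ 2 := by positivity
    have h2 : 0 ≤ ((n : ℝ) - 1) / (n : ℝ) ^ 2 * (2 * n / ((n : ℝ) - 1) - x) ^ 2 := by positivity
    linarith
  refine ⟨?_, ?_, ?_, ?_⟩
  · -- the limit statement
    intro r hr
    have hr1 : (n:ℝ) / ((n:ℝ)-1) ≤ r := hr.1
    have hr2 : r ≤ 2 := hr.2
    set s : ℝ := 2 * (n:ℝ) / ((n : ℝ) - 1) - r with hs
    have hrpos : 0 < r := lt_of_lt_of_le (div_pos hnpos hm1pos) hr1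
    have h2lt : (2:ℝ) < 2 * (n:ℝ) / ((n:ℝ)-1) := by
      rw [lt_div_iff₀ hm1pos]; linarith
    have hspos : 0 < s := by rw [hs]; linarith
    have hrne : r ≠ 0 := ne_of_gt hrpos
    have hsne : s ≠ 0 := ne_of_gt hspos
    have hrs : ((n:ℝ)-1)*(r+s) = 2*(n:ℝ) := by rw [hs]; field_simp; ring
    have htne : ∀ᶠ t in 𝓝[>] (0:ℝ), (t:ℝ) ≠ 0 :=
      eventually_mem_nhdsWithin.mono (fun t ht => ne_of_gt ht)
    -- limits of the Efun compositions
    have hmk : ∀ u : ℝ, u ≠ 0 → Tendsto (fun t : ℝ => t * u) (𝓝[>] 0) (𝓝[≠] 0) := by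
      intro u hu
      rw [tendsto_nhdsWithin_iff]
      constructor
      · have h : Tendsto (fun t : ℝ => t * u) (𝓝 (0:ℝ)) (𝓝 (0 * u)) :=
          Tendsto.mul_const u (tendsto_id (x := 𝓝 (0:ℝ)))
        rw [zero_mul] at h
        exact h.mono_left nhdsWithin_le_nhds
      · filter_upwards [self_mem_nhdsWithin] with t ht
        exact mul_ne_zero (ne_of_gt ht) hu
    have hEr : Tendsto (fun t : ℝ => Efun (t*r)) (𝓝[>] (0:ℝ)) (𝓝 (1/2)) :=
      Efun_tendsto.comp (hmk r hrne)
    have hEs : Tendsto (fun t : ℝ => Efun (t*s)) (𝓝[>] (0:ℝ)) (𝓝 (1/2)) :=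
      Efun_tendsto.comp (hmk s hsne)
    have htid : Tendsto (fun t : ℝ => t) (𝓝[>] (0:ℝ)) (𝓝 0) :=
      tendsto_id.mono_right nhdsWithin_le_nhds
    have hE1 : Tendsto (fun t : ℝ => Efun t) (𝓝[>] (0:ℝ)) (𝓝 (1/2)) := by
      have h := Efun_tendsto.comp (show Tendsto (fun t : ℝ => t) (𝓝[>] (0:ℝ)) (𝓝[≠] 0) by
        rw [tendsto_nhdsWithin_iff]
        exact ⟨htid, eventually_mem_nhdsWithin.mono (fun t ht => ne_of_gt ht)⟩)
      exact h
    have htuple : Tendsto (fun t : ℝ => ((Efun (t*r), Efun (t*s), Efun t, t) : ℝ×ℝ×ℝ×ℝ))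
        (𝓝[>] (0:ℝ)) (𝓝 ((1/2 : ℝ), (1/2:ℝ), (1/2:ℝ), (0:ℝ))) :=
      hEr.prodMk_nhds (hEs.prodMk_nhds (hE1.prodMk_nhds htid))
    -- limit of Gfun
    have hGlim : Tendsto (Gfun n r s) (𝓝[>] (0:ℝ)) (𝓝 (((n:ℝ)-1)*(r^2+s^2)/2)) := by
      have hc : Continuous (Gpoly n r s) := by unfold Gpoly; fun_prop
      have h3 := (hc.tendsto ((1/2 : ℝ), (1/2:ℝ), (1/2:ℝ), (0:ℝ))).comp htuple
      have h3' : Tendsto (Gfun n r s) (𝓝[>] (0:ℝ))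
          (𝓝 (Gpoly n r s ((1/2 : ℝ), (1/2:ℝ), (1/2:ℝ), (0:ℝ)))) :=
        h3.congr (fun t => by rw [Function.comp_apply]; rfl)
      have hval : Gpoly n r s ((1/2 : ℝ), (1/2:ℝ), (1/2:ℝ), (0:ℝ))
          = ((n:ℝ)-1)*(r^2+s^2)/2 := by
        unfold Gpoly
        simp only [Prod.fst, Prod.snd]
        linear_combination ((((n:ℝ)-1)*(r+s) + 2*(n:ℝ))/2) * hrs
      rw [hval] at h3'
      exact h3'
    -- limit of Hfun
    have hHlim : Tendsto (Hfun n r s) (𝓝[>] (0:ℝ)) (𝓝 (((n:ℝ)-1)*(r^2+s^2)/2 - (n:ℝ))) := by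
      have hc : Continuous (Hpoly n r s) := by unfold Hpoly; fun_prop
      have h3 := (hc.tendsto ((1/2 : ℝ), (1/2:ℝ), (1/2:ℝ), (0:ℝ))).comp htuple
      have h3' : Tendsto (Hfun n r s) (𝓝[>] (0:ℝ))
          (𝓝 (Hpoly n r s ((1/2 : ℝ), (1/2:ℝ), (1/2:ℝ), (0:ℝ)))) :=
        h3.congr (fun t => by rw [Function.comp_apply]; rfl)
      have hval : Hpoly n r s ((1/2 : ℝ), (1/2:ℝ), (1/2:ℝ), (0:ℝ))
          = ((n:ℝ)-1)*(r^2+s^2)/2 - (n:ℝ) := by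
        unfold Hpoly
        simp only [Prod.fst, Prod.snd]
        ring
      rw [hval] at h3'
      exact h3'
    have hLDpos : 0 < ((n:ℝ)-1)*(r^2+s^2)/2 :=
      div_pos (mul_pos hm1pos (by positivity)) two_pos
    have hLDne : ((n:ℝ)-1)*(r^2+s^2)/2 ≠ 0 := ne_of_gt hLDpos
    have hGpos : ∀ᶠ t in 𝓝[>] (0:ℝ), 0 < Gfun n r s t :=
      hGlim.eventually (eventually_gt_nhds hLDpos)
    have hmain : Tendsto (fun t => (n:ℝ) * Hfun n r s t / Gfun n r s t) (𝓝[>] (0:ℝ))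
        (𝓝 ((n:ℝ) * (((n:ℝ)-1)*(r^2+s^2)/2 - (n:ℝ)) / (((n:ℝ)-1)*(r^2+s^2)/2))) :=
      (tendsto_const_nhds.mul hHlim).div hGlim hLDne
    have hLval : (n:ℝ) * (((n:ℝ)-1)*(r^2+s^2)/2 - (n:ℝ)) / (((n:ℝ)-1)*(r^2+s^2)/2)
        = Lfun n r := by
      have hdenr := hden r hr
      rw [hs]
      unfold Lfun
      rw [← hs, div_eq_div_iff (by rw [hs] at hLDne ⊢; exact hLDne) hdenr, hs]
      field_simp
      ring
    rw [hLval] at hmain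
    apply hmain.congr'
    filter_upwards [self_mem_nhdsWithin, hGpos] with t ht hGt
    have ht0 : (0:ℝ) < t := ht
    have htn : t ≠ 0 := ne_of_gt ht0
    have ht2 : t^2 ≠ 0 := pow_ne_zero 2 htn
    have haa : Real.exp (-(t*r)) ≠ 1 := by
      simp only [Ne, Real.exp_eq_one_iff, neg_eq_zero]
      exact mul_ne_zero htn hrne
    have hbb : Real.exp (-(t*s)) ≠ 1 := by
      simp only [Ne, Real.exp_eq_one_iff, neg_eq_zero]
      exact mul_ne_zero htn hsne
    have hDD : (1 + ((n:ℝ)-1)*Real.exp (-(t*r)))*(1 + ((n:ℝ)-1)*Real.exp (-(t*s)))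
        - (n:ℝ)^2*Real.exp (-t)^2 ≠ 0 := by
      rw [Df_eq n r s t htn hrne hsne hrs]
      exact mul_ne_zero ht2 (ne_of_gt hGt)
    rw [of_exp_eq_blk n r s t, sum_inv_blk n _ _ _ haa hbb hDD,
      Nf_eq n r s t htn hrne hsne hrs, Df_eq n r s t htn hrne hsne hrs,
      show (n:ℝ) * (t^2 * Hfun n r s t) = t^2 * ((n:ℝ) * Hfun n r s t) from by ring,
      mul_div_mul_left _ _ ht2]
  · apply ContinuousOn.div
    · fun_prop
    · fun_prop
    · exact hden
  · have h := hden ((n : ℝ) / ((n : ℝ) - 1)) (by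
      constructor
      · exact le_refl _
      · rw [div_le_iff₀ hm1pos]; linarith)
    unfold Lfun
    rw [div_eq_one_iff_eq h]
    field_simp
    ring
  · have h2mem : (2:ℝ) ∈ Set.Icc ((n : ℝ) / ((n : ℝ) - 1)) 2 := by
      constructor
      · rw [div_le_iff₀ hm1pos]; linarith
      · exact le_refl _
    have h := hden 2 h2mem
    have hq : (n:ℝ)^2 - 2*n + 2 ≠ 0 := by nlinarith
    unfold Lfun
    rw [div_eq_div_iff h hq]
    field_simp
    ring
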